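/- The raising relation (d/dr - m/r) Q_n^{k,m}(r) = 2√(n(n+k+m+1)) Q_{n-1}^{k+1,m+1}(r) holds for r ∈ (0,1). -/

import Mathlib

/-!
Expanding in the basis `(x - 1) ^ (n - s) * (x + 1) ^ s`, differentiation lowers one of the two
exponents, and `Γ(z + 1) = z Γ(z)` merges the two resulting coefficients into those of
`P_n^{(a+1,b+1)}`, giving `(P_{n+1}^{(a,b)})' = (n + a + b + 2) / 2 * P_n^{(a+1,b+1)}`.
For `Q = r ^ m * g(r)` the operator `d/dr - m/r` only sees `r ^ m * g'(r)`, and the chain rule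
through `2 r ^ 2 - 1` contributes the factor `4 r` raising `m` to `m + 1`. Finally
`(n + k + m + 2) N_n^{k+1,m+1} = (n + 1) N_{n+1}^{k,m}` converts the normalisations.
-/

/-- The Jacobi polynomial `P_n^{(a,b)}(x)`. -/
noncomputable def jacobiP (n : ℕ) (a b : ℝ) (x : ℝ) : ℝ :=
  (1 / 2 ^ n) * ∑ s ∈ Finset.range (n + 1),
    (Real.Gamma (a + n + 1) / (Real.Gamma (a + n - s + 1) * (Nat.factorial s))) *
    (Real.Gamma (b + n + 1) / (Real.Gamma (b + s + 1) * (Nat.factorial (n - s)))) *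
    (x - 1) ^ (n - s) * (x + 1) ^ s
/-- The Jacobi orthogonality normalization `W_n^{a,b}`. -/
noncomputable def Wnorm (n : ℕ) (a b : ℝ) : ℝ :=
  2 ^ (a + b + 1) / (2 * n + a + b + 1) *
    (Real.Gamma (n + a + 1) * Real.Gamma (n + b + 1) /
      (Real.Gamma (n + a + b + 1) * (Nat.factorial n)))

/-- The normalization `N_n^{k,m} = W_n^{k,m} / 2^{2+k+m}`. -/
noncomputable def Nnorm (n k m : ℕ) : ℝ := Wnorm n k m / 2 ^ (2 + k + m)

/-- The radial basis element `Q_n^{k,m}(r)`. -/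
noncomputable def Q (n k m : ℕ) (r : ℝ) : ℝ :=
  r ^ m * jacobiP n k m (2 * r ^ 2 - 1) / Real.sqrt (Nnorm n k m)

open Finset

noncomputable def jacobiCoeff (n : ℕ) (a b : ℝ) (s : ℕ) : ℝ :=
  (Real.Gamma (a + n + 1) / (Real.Gamma (a + n - s + 1) * (Nat.factorial s))) *
    (Real.Gamma (b + n + 1) / (Real.Gamma (b + s + 1) * (Nat.factorial (n - s))))

theorem jacobiP_eq_sum (n : ℕ) (a b x : ℝ) :
    jacobiP n a b x =
      1 / 2 ^ n * ∑ s ∈ range (n + 1), jacobiCoeff n a b s * (x - 1) ^ (n - s) * (x + 1) ^ s :=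
  rfl

theorem jacobiCoeff_self_add (s d : ℕ) (a b : ℝ) :
    jacobiCoeff (s + d) a b s = Real.Gamma (a + s + d + 1) * Real.Gamma (b + s + d + 1) /
      (Real.Gamma (a + d + 1) * Real.Gamma (b + s + 1) * s.factorial * d.factorial) := by
  rw [jacobiCoeff, Nat.add_sub_cancel_left]
  push_cast
  ring_nf

theorem jacobiCoeff_succ_rec {a b : ℝ} (ha : -1 < a) (hb : -1 < b) (s d : ℕ) :
    (d + 1) * jacobiCoeff (s + d + 1) a b s + (s + 1) * jacobiCoeff (s + d + 1) a b (s + 1) =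
      (a + b + s + d + 2) * jacobiCoeff (s + d) (a + 1) (b + 1) s := by
  have hA : 0 < a + d + 1 := by linarith [d.cast_nonneg (α := ℝ)]
  have hB : 0 < b + s + 1 := by linarith [s.cast_nonneg (α := ℝ)]
  have shiftA : ∀ c : ℝ, c = a + d + 1 + 1 → Real.Gamma c = (a + d + 1) * Real.Gamma (a + d + 1) :=
    fun c hc => hc ▸ Real.Gamma_add_one hA.ne'
  have shiftB : ∀ c : ℝ, c = b + s + 1 + 1 → Real.Gamma c = (b + s + 1) * Real.Gamma (b + s + 1) :=
    fun c hc => hc ▸ Real.Gamma_add_one hB.ne'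
  rw [jacobiCoeff_self_add, show s + d + 1 = s + (d + 1) from rfl, jacobiCoeff_self_add,
    show s + (d + 1) = (s + 1) + d by omega, jacobiCoeff_self_add]
  push_cast
  rw [shiftA (a + (d + 1) + 1) (by ring), shiftA (a + 1 + d + 1) (by ring),
    shiftB (b + (s + 1) + 1) (by ring), shiftB (b + 1 + s + 1) (by ring)]
  simp only [Nat.factorial_succ, Nat.cast_mul, Nat.cast_succ]
  field_simp
  ring_nf

theorem hasDerivAt_sum_sub_one_pow_mul_add_one_pow (n : ℕ) (c : ℕ → ℝ) (x : ℝ) :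
    HasDerivAt (fun y => ∑ s ∈ range (n + 2), c s * (y - 1) ^ (n + 1 - s) * (y + 1) ^ s)
      (∑ s ∈ range (n + 1), ((n + 1 - s : ℕ) * c s + (s + 1) * c (s + 1)) *
        (x - 1) ^ (n - s) * (x + 1) ^ s) x := by
  have hterm : ∀ s ∈ range (n + 2), HasDerivAt (fun y => c s * (y - 1) ^ (n + 1 - s) * (y + 1) ^ s)
      ((n + 1 - s : ℕ) * c s * (x - 1) ^ (n - s) * (x + 1) ^ s +
        s * c s * (x - 1) ^ (n + 1 - s) * (x + 1) ^ (s - 1)) x := by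
    intro s _
    have h := ((((hasDerivAt_id' x).sub_const 1).fun_pow (n + 1 - s)).fun_mul
      (((hasDerivAt_id' x).add_const 1).fun_pow s)).const_mul (c s)
    simp only [← mul_assoc] at h
    refine h.congr_deriv ?_
    rw [show n + 1 - s - 1 = n - s by omega]
    ring
  refine (HasDerivAt.fun_sum hterm).congr_deriv ?_
  rw [sum_add_distrib, sum_range_succ, sum_range_succ' _ (n + 1)]
  simp only [Nat.sub_self, Nat.cast_zero, zero_mul, add_zero, Nat.add_sub_cancel,
    Nat.add_sub_add_right]
  rw [← sum_add_distrib]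
  refine sum_congr rfl fun s _ => ?_
  push_cast
  ring

theorem hasDerivAt_jacobiP_succ (n : ℕ) {a b : ℝ} (ha : -1 < a) (hb : -1 < b) (x : ℝ) :
    HasDerivAt (jacobiP (n + 1) a b) ((a + b + n + 2) / 2 * jacobiP n (a + 1) (b + 1) x) x := by
  refine ((hasDerivAt_sum_sub_one_pow_mul_add_one_pow n (jacobiCoeff (n + 1) a b) x).const_mul
    (1 / 2 ^ (n + 1))).congr_deriv ?_
  rw [jacobiP_eq_sum, mul_sum, mul_sum, mul_sum]
  refine sum_congr rfl fun s hs => ?_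
  obtain ⟨d, rfl⟩ := Nat.exists_eq_add_of_le (mem_range_succ_iff.mp hs)
  rw [show s + d + 1 - s = d + 1 by omega, Nat.add_sub_cancel_left]
  push_cast
  linear_combination (x - 1) ^ d * (x + 1) ^ s / 2 ^ (s + d + 1) * jacobiCoeff_succ_rec ha hb s d

theorem Wnorm_succ {n : ℕ} {a b : ℝ} (h : (n : ℝ) + a + b + 2 ≠ 0) :
    (n + a + b + 2) * Wnorm n (a + 1) (b + 1) = 4 * (n + 1) * Wnorm (n + 1) a b := by
  unfold Wnorm
  rw [show (n : ℝ) + (a + 1) + (b + 1) + 1 = n + a + b + 2 + 1 by ring, Real.Gamma_add_one h,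
    show a + 1 + (b + 1) + 1 = a + b + 1 + 2 by ring, Real.rpow_add two_pos, Nat.factorial_succ]
  push_cast
  ring_nf
  field_simp
  ring

theorem Nnorm_pos (n k m : ℕ) : 0 < Nnorm n k m := by
  have h1 : 0 < Real.Gamma ((n : ℝ) + k + 1) := Real.Gamma_pos_of_pos (by positivity)
  have h2 : 0 < Real.Gamma ((n : ℝ) + m + 1) := Real.Gamma_pos_of_pos (by positivity)
  have h3 : 0 < Real.Gamma ((n : ℝ) + k + m + 1) := Real.Gamma_pos_of_pos (by positivity)
  unfold Nnorm Wnorm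
  positivity

theorem Nnorm_succ (n k m : ℕ) :
    ((n : ℝ) + k + m + 2) * Nnorm n (k + 1) (m + 1) = (n + 1) * Nnorm (n + 1) k m := by
  have h := Wnorm_succ (n := n) (a := k) (b := m) (by positivity)
  unfold Nnorm
  rw [show 2 + (k + 1) + (m + 1) = 2 + k + m + 2 by ring, pow_add]
  push_cast
  field_simp
  linear_combination h

theorem div_sqrt_Nnorm_succ (n k m : ℕ) :
    (n + k + m + 2) / √(Nnorm (n + 1) k m) =
      √((n + 1) * (n + 1 + k + m + 1)) / √(Nnorm n (k + 1) (m + 1)) := by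
  have h := Nnorm_succ n k m
  have hN := Nnorm_pos n (k + 1) (m + 1)
  have hN' := Nnorm_pos (n + 1) k m
  rw [← Real.sqrt_div' _ hN.le, div_eq_iff (Real.sqrt_pos.mpr hN').ne', ← Real.sqrt_mul
    (div_nonneg (by positivity) hN.le), ← Real.sqrt_sq (by positivity : (0:ℝ) ≤ n + k + m + 2)]
  congr 1
  field_simp
  linear_combination (n + k + m + 2 : ℝ) * h

theorem deriv_pow_mul_sub_div_mul {f g : ℝ → ℝ} {g' r : ℝ} (m : ℕ) (hf : ∀ t, f t = t ^ m * g t)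
    (hg : HasDerivAt g g' r) (hr : r ≠ 0) : deriv f r - m / r * f r = r ^ m * g' := by
  rw [hf r, funext hf, ((hasDerivAt_pow m r).fun_mul hg).deriv]
  cases m with
  | zero => simp
  | succ m =>
    rw [Nat.add_sub_cancel]
    field_simp
    ring

theorem Q_raising (k m n : ℕ) (hn : 1 ≤ n) (r : ℝ) (hr : r ∈ Set.Ioo (0:ℝ) 1) :
    deriv (Q n k m) r - ((m : ℝ) / r) * Q n k m r =
      2 * Real.sqrt ((n : ℝ) * (n + k + m + 1)) * Q (n - 1) (k + 1) (m + 1) r := by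
  obtain ⟨p, rfl⟩ := Nat.exists_eq_add_of_le' hn
  have hJ := (hasDerivAt_jacobiP_succ p (neg_one_lt_zero.trans_le k.cast_nonneg)
    (neg_one_lt_zero.trans_le m.cast_nonneg) (2 * r ^ 2 - 1)).comp r
    (((hasDerivAt_pow 2 r).const_mul 2).sub_const 1)
  have hQ : ∀ t, Q (p + 1) k m t =
      t ^ m * (jacobiP (p + 1) k m (2 * t ^ 2 - 1) / √(Nnorm (p + 1) k m)) :=
    fun t => mul_div_assoc _ _ _
  rw [deriv_pow_mul_sub_div_mul m hQ (hJ.div_const _) hr.1.ne', Nat.add_sub_cancel, Q]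
  push_cast
  linear_combination (2 * r ^ (m + 1) * jacobiP p (k + 1) (m + 1) (2 * r ^ 2 - 1)) *
    div_sqrt_Nnorm_succ p k m
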